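/- Fix N∈ℕ. (1) Suppose g^b, g^t : {0,…,N}→ℤ∪{−∞} with g^b(j)≤g^t(j) for all j, and x^b≤x^t, y^b≤y^t in ℤ, and that Ω(N,x^b,y^b,∞,g^b) and Ω(N,x^t,y^t,∞,g^t) are nonempty. Then there exists a probability measure π on pairs (L^b,L^t) of Bernoulli paths whose first marginal is P^{N,x^b,y^b,∞,g^b}, whose second marginal is P^{N,x^t,y^t,∞,g^t}, and such that π( L^b(j)≤L^t(j) for all 0≤j≤N ) = 1. (2) Suppose f^b, f^t : {0,…,N}→ℤ∪{∞} with f^b(j)≤f^t(j) for all j, and x^b≤x^t, y^b≤y^t in ℤ, and that Ω(N,x^b,y^b,f^b,−∞) and Ω(N,x^t,y^t,f^t,−∞) are nonempty. Then there exists a probability measure π on pairs (L^b,L^t) whose first marginal is P^{N,x^b,y^b,f^b,−∞}, whose second marginal is P^{N,x^t,y^t,f^t,−∞}, and such that π( L^b(j)≤L^t(j) for all 0≤j≤N ) = 1. -/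

import Mathlib

open scoped Classical

/-- A Bernoulli path on `{0,…,N}`: increments in `{0,1}`. -/
def IsBPath (N : ℕ) (L : Fin (N+1) → ℤ) : Prop :=
  ∀ j : Fin N, L j.succ = L j.castSucc ∨ L j.succ = L j.castSucc + 1

/-- `Ω(N,x,y,f,g)`: Bernoulli paths from `x` to `y` staying below the barrier `f`
and above the barrier `g`. -/
def pathSetB (N : ℕ) (x y : ℤ) (f : Fin (N+1) → WithTop ℤ) (g : Fin (N+1) → WithBot ℤ) :
    Set (Fin (N+1) → ℤ) :=
  {L | IsBPath N L ∧ L 0 = x ∧ L (Fin.last N) = y ∧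
    (∀ j, (L j : WithTop ℤ) ≤ f j) ∧ (∀ j, g j ≤ (L j : WithBot ℤ))}

/-- `π` is a monotone coupling of the uniform measures on `Ωb` and `Ωt`:
it is a probability mass function on pairs of paths, supported on ordered pairs,
whose marginals are the two uniform measures. -/
def IsMonotoneCoupling (N : ℕ) (Ωb Ωt : Set (Fin (N+1) → ℤ))
    (π : ((Fin (N+1) → ℤ) × (Fin (N+1) → ℤ)) → ℝ) : Prop :=
  (∀ p, 0 ≤ π p) ∧
  (∀ p, π p ≠ 0 → p.1 ∈ Ωb ∧ p.2 ∈ Ωt ∧ ∀ j, p.1 j ≤ p.2 j) ∧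
  (∀ Lb, ∑' Lt, π (Lb, Lt) = (if Lb ∈ Ωb then ((Ωb.ncard : ℝ))⁻¹ else 0)) ∧
  (∀ Lt, ∑' Lb, π (Lb, Lt) = (if Lt ∈ Ωt then ((Ωt.ncard : ℝ))⁻¹ else 0))

/-!
The pointwise minimum of a path of `Ωᵇ` and a path of `Ωᵗ` lies in `Ωᵇ` and their maximum in
`Ωᵗ`, so the two finite path sets `A`, `B` satisfy `A ⊼ B ⊆ A` and `A ⊻ B ⊆ B` in the distributive
lattice `ℤ^{N+1}`. Blow up each `a ∈ A` into `|B|` copies and each `b ∈ B` into `|A|` copies, and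
join a copy of `a` to a copy of `b` when `a ≤ b`. For the copies of a set `A' ⊆ A`, Daykin's
inequality `|A'| |B| ≤ |A' ⊼ B| |A' ⊻ B| ≤ |A| |{b ∈ B | ∃ a ∈ A', a ≤ b}|` is exactly Hall's
condition, so there is a perfect matching; the uniform measure on its edges is the monotone
coupling.
-/

open Finset
open scoped FinsetFamily

variable {α : Type*}

lemma card_filter_fst_prod_fin (C : Finset α) (k : ℕ) (P : α → Prop) [DecidablePred P] :
    #{y : C × Fin k | P y.1} = #{c ∈ C | P c} * k := by
  have h : ({y : C × Fin k | P y.1} : Finset _).map (.prodMap (.subtype _) (.refl _))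
      = {c ∈ C | P c} ×ˢ univ := by
    ext ⟨a, i⟩
    simp [and_comm]
  rw [← card_map, h, card_product, card_fin]

lemma card_filter_fst_eq_prod_fin [DecidableEq α] (C : Finset α) (k : ℕ) (a : α) :
    #{y : C × Fin k | (y.1 : α) = a} = if a ∈ C then k else 0 := by
  rw [card_filter_fst_prod_fin C k (· = a), card_filter]
  split_ifs with ha <;> simp [ha]

lemma tsum_card_fiber_eq_card_fiber_fst {ι β γ : Type*} [Fintype ι] [DecidableEq β] [DecidableEq γ]
    (φ : ι → β × γ) (a : β) :
    ∑' b, (#{x | φ x = (a, b)} : ℝ) = #{x | (φ x).1 = a} := by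
  rw [tsum_eq_sum (s := univ.image fun x => (φ x).2)]
  · rw [← Nat.cast_sum, card_eq_sum_card_fiberwise (f := fun x => (φ x).2)
      (t := univ.image fun x => (φ x).2) (fun x _ => mem_image_of_mem _ (mem_univ x))]
    simp only [filter_filter, Prod.ext_iff]
  · intro b hb
    simp only [mem_image, mem_univ, true_and, not_exists] at hb
    simp [Prod.ext_iff, hb]

lemma tsum_card_fiber_eq_card_fiber_snd {ι β γ : Type*} [Fintype ι] [DecidableEq β] [DecidableEq γ]
    (φ : ι → β × γ) (b : γ) :
    ∑' a, (#{x | φ x = (a, b)} : ℝ) = #{x | (φ x).2 = b} := by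
  simpa [Prod.swap_eq_iff_eq_swap] using tsum_card_fiber_eq_card_fiber_fst (Prod.swap ∘ φ) b

lemma card_mul_card_le_card_mul_card_filter_exists_le [DistribLattice α] [DecidableEq α]
    {A B A' : Finset α} (hinf : A ⊼ B ⊆ A) (hsup : A ⊻ B ⊆ B) (hA' : A' ⊆ A) :
    #A' * #B ≤ #A * #{b ∈ B | ∃ a ∈ A', a ≤ b} := by
  calc #A' * #B ≤ #(A' ⊼ B) * #(A' ⊻ B) := le_card_infs_mul_card_sups A' B
    _ ≤ #A * #{b ∈ B | ∃ a ∈ A', a ≤ b} := by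
      gcongr
      · exact (infs_subset_right hA').trans hinf
      · rintro _ hc
        obtain ⟨a, ha, b, hb, rfl⟩ := mem_sups.1 hc
        exact mem_filter.2 ⟨hsup (sup_mem_sups (hA' ha) hb), a, ha, le_sup_left⟩

lemma exists_equiv_prod_fin_le [DistribLattice α] [DecidableEq α] {A B : Finset α}
    (hinf : A ⊼ B ⊆ A) (hsup : A ⊻ B ⊆ B) :
    ∃ e : A × Fin #B ≃ B × Fin #A, ∀ x, (x.1 : α) ≤ (e x).1 := by
  let t : A × Fin #B → Finset (B × Fin #A) := fun x => {y | (x.1 : α) ≤ y.1}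
  have hall : ∀ S : Finset (A × Fin #B), #S ≤ #(S.biUnion t) := by
    intro S
    set A' := S.image fun x => (x.1 : α)
    have hA' : A' ⊆ A := image_subset_iff.2 fun x _ => x.1.2
    have hfiber : ∀ a ∈ A', #{x ∈ S | (x.1 : α) = a} ≤ #B := fun a _ =>
      calc #{x ∈ S | (x.1 : α) = a} ≤ #{x : A × Fin #B | (x.1 : α) = a} :=
            card_le_card (filter_subset_filter _ (subset_univ S))
        _ ≤ #B := by rw [card_filter_fst_eq_prod_fin]; split_ifs <;> simp
    calc #S ≤ #B * #A' := card_le_mul_card_image S #B hfiber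
      _ = #A' * #B := mul_comm _ _
      _ ≤ #A * #{b ∈ B | ∃ a ∈ A', a ≤ b} :=
          card_mul_card_le_card_mul_card_filter_exists_le hinf hsup hA'
      _ = #{y : B × Fin #A | ∃ a ∈ A', a ≤ y.1} := by
          rw [mul_comm]; convert (card_filter_fst_prod_fin B #A fun b => ∃ a ∈ A', a ≤ b).symm
      _ ≤ #(S.biUnion t) := card_le_card fun y hy => by
          obtain ⟨_, ha, hay⟩ := (mem_filter.1 hy).2
          obtain ⟨x, hx, rfl⟩ := mem_image.1 ha
          exact mem_biUnion.2 ⟨x, hx, by simpa [t] using hay⟩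
  obtain ⟨f, hf, hft⟩ := (all_card_le_biUnion_card_iff_exists_injective t).1 hall
  have hcard : Fintype.card (A × Fin #B) = Fintype.card (B × Fin #A) := by simp [mul_comm]
  exact ⟨.ofBijective f ((Fintype.bijective_iff_injective_and_card f).2 ⟨hf, hcard⟩),
    fun x => by simpa [t] using hft x⟩
lemma exists_coupling_of_equiv_prod_fin [Preorder α] [DecidableEq α] {A B : Finset α}
    (hA : A.Nonempty) (hB : B.Nonempty)
    (e : A × Fin #B ≃ B × Fin #A) (he : ∀ x, (x.1 : α) ≤ (e x).1) :
    ∃ π : α × α → ℝ, (∀ p, 0 ≤ π p) ∧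
      (∀ p, π p ≠ 0 → p.1 ∈ A ∧ p.2 ∈ B ∧ p.1 ≤ p.2) ∧
      (∀ a, ∑' b, π (a, b) = if a ∈ A then (#A : ℝ)⁻¹ else 0) ∧
      (∀ b, ∑' a, π (a, b) = if b ∈ B then (#B : ℝ)⁻¹ else 0) := by
  let φ : A × Fin #B → α × α := fun x => (x.1, (e x).1)
  have hA0 : (#A : ℝ) ≠ 0 := by positivity
  have hB0 : (#B : ℝ) ≠ 0 := by positivity
  refine ⟨fun p => #{x | φ x = p} / (#A * #B), fun p => by positivity, fun p hp => ?_,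
    fun a => ?_, fun b => ?_⟩
  · obtain ⟨x, hx⟩ : ∃ x, φ x = p := by
      by_contra! h
      simp [filter_false_of_mem fun x _ => h x] at hp
    subst hx
    exact ⟨x.1.2, (e x).1.2, he x⟩
  · rw [tsum_div_const, tsum_card_fiber_eq_card_fiber_fst, card_filter_fst_eq_prod_fin]
    split_ifs
    · field_simp
    · simp
  · have hcount : #{x | (φ x).2 = b} = #{y : B × Fin #A | (y.1 : α) = b} :=
      card_equiv e (by simp [φ])
    rw [tsum_div_const, tsum_card_fiber_eq_card_fiber_snd, hcount, card_filter_fst_eq_prod_fin]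
    split_ifs
    · field_simp
    · simp

lemma exists_isMonotoneCoupling_of_inf_mem_of_sup_mem {N : ℕ} {Ωb Ωt : Set (Fin (N+1) → ℤ)}
    (hb : Ωb.Finite) (ht : Ωt.Finite) (hb0 : Ωb.Nonempty) (ht0 : Ωt.Nonempty)
    (hinf : ∀ L ∈ Ωb, ∀ M ∈ Ωt, L ⊓ M ∈ Ωb) (hsup : ∀ L ∈ Ωb, ∀ M ∈ Ωt, L ⊔ M ∈ Ωt) :
    ∃ π, IsMonotoneCoupling N Ωb Ωt π := by
  lift Ωb to Finset (Fin (N+1) → ℤ) using hb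
  lift Ωt to Finset (Fin (N+1) → ℤ) using ht
  obtain ⟨e, he⟩ := exists_equiv_prod_fin_le (infs_subset_iff.2 hinf) (sups_subset_iff.2 hsup)
  obtain ⟨π, hπ0, hπ, hπb, hπt⟩ :=
    exists_coupling_of_equiv_prod_fin (coe_nonempty.1 hb0) (coe_nonempty.1 ht0) e he
  exact ⟨π, hπ0, hπ, by simpa using hπb, by simpa using hπt⟩

namespace IsBPath

variable {N : ℕ} {L M : Fin (N+1) → ℤ}

lemma inf (hL : IsBPath N L) (hM : IsBPath N M) : IsBPath N (L ⊓ M) := fun j => by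
  simp only [Pi.inf_apply]
  rcases hL j with h | h <;> rcases hM j with h' | h' <;> omega

lemma sup (hL : IsBPath N L) (hM : IsBPath N M) : IsBPath N (L ⊔ M) := fun j => by
  simp only [Pi.sup_apply]
  rcases hL j with h | h <;> rcases hM j with h' | h' <;> omega

lemma mem_Icc (hL : IsBPath N L) (j : Fin (N+1)) : L j ∈ Set.Icc (L 0) (L 0 + j) := by
  induction j using Fin.induction with
  | zero => simp
  | succ i ih =>
    rw [Set.mem_Icc] at ih ⊢
    rcases hL i with h | h <;> simp only [Fin.val_succ, Fin.val_castSucc] at ih ⊢ <;>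
      push_cast <;> omega

end IsBPath

lemma pathSetB_finite (N : ℕ) (x y : ℤ) (f : Fin (N+1) → WithTop ℤ)
    (g : Fin (N+1) → WithBot ℤ) :
    (pathSetB N x y f g).Finite := by
  refine (Set.finite_Icc (fun _ => x) (fun _ => x + N)).subset fun L ⟨hL, hL0, _⟩ => ?_
  have hj (j : Fin (N+1)) : ((j : ℕ) : ℤ) ≤ N := by exact_mod_cast j.is_le
  exact ⟨fun j => hL0 ▸ (hL.mem_Icc j).1, fun j => (hL.mem_Icc j).2.trans (by simp [hL0, hj])⟩

section pathSetB

variable {N : ℕ} {xb xt yb yt : ℤ} {fB fT : Fin (N+1) → WithTop ℤ}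
  {gB gT : Fin (N+1) → WithBot ℤ}

lemma inf_mem_pathSetB {L M : Fin (N+1) → ℤ} (hg : gB ≤ gT) (hx : xb ≤ xt) (hy : yb ≤ yt)
    (hL : L ∈ pathSetB N xb yb fB gB) (hM : M ∈ pathSetB N xt yt fT gT) :
    L ⊓ M ∈ pathSetB N xb yb fB gB := by
  obtain ⟨hLB, hL0, hLN, hLf, hLg⟩ := hL
  obtain ⟨hMB, hM0, hMN, -, hMg⟩ := hM
  refine ⟨hLB.inf hMB, by simp [hL0, hM0, hx], by simp [hLN, hMN, hy], fun j => ?_, fun j => ?_⟩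
  · exact (WithTop.coe_le_coe.2 inf_le_left).trans (hLf j)
  · simpa [WithBot.coe_min] using ⟨hLg j, (hg j).trans (hMg j)⟩

lemma sup_mem_pathSetB {L M : Fin (N+1) → ℤ} (hf : fB ≤ fT) (hx : xb ≤ xt) (hy : yb ≤ yt)
    (hL : L ∈ pathSetB N xb yb fB gB) (hM : M ∈ pathSetB N xt yt fT gT) :
    L ⊔ M ∈ pathSetB N xt yt fT gT := by
  obtain ⟨hLB, hL0, hLN, hLf, -⟩ := hL
  obtain ⟨hMB, hM0, hMN, hMf, hMg⟩ := hM
  refine ⟨hLB.sup hMB, by simp [hL0, hM0, hx], by simp [hLN, hMN, hy], fun j => ?_, fun j => ?_⟩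
  · simpa [WithTop.coe_max] using ⟨(hLf j).trans (hf j), hMf j⟩
  · exact (hMg j).trans (WithBot.coe_le_coe.2 le_sup_right)

theorem exists_isMonotoneCoupling_pathSetB (hf : fB ≤ fT) (hg : gB ≤ gT) (hx : xb ≤ xt)
    (hy : yb ≤ yt) (hb : (pathSetB N xb yb fB gB).Nonempty)
    (ht : (pathSetB N xt yt fT gT).Nonempty) :
    ∃ π, IsMonotoneCoupling N (pathSetB N xb yb fB gB) (pathSetB N xt yt fT gT) π :=
  exists_isMonotoneCoupling_of_inf_mem_of_sup_mem (pathSetB_finite ..) (pathSetB_finite ..) hb ht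
    (fun _ hL _ hM => inf_mem_pathSetB hg hx hy hL hM)
    (fun _ hL _ hM => sup_mem_pathSetB hf hx hy hL hM)

end pathSetB

/-- Lemma 3.3: monotone couplings of Bernoulli random walk bridges, (1) with lower barriers,
(2) with upper barriers. -/
theorem stmt19 (N : ℕ) :
    (∀ (gB gT : Fin (N+1) → WithBot ℤ) (xb xt yb yt : ℤ),
      (∀ j, gB j ≤ gT j) → xb ≤ xt → yb ≤ yt →
      (pathSetB N xb yb (fun _ => ⊤) gB).Nonempty →
      (pathSetB N xt yt (fun _ => ⊤) gT).Nonempty →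
      ∃ π, IsMonotoneCoupling N (pathSetB N xb yb (fun _ => ⊤) gB)
        (pathSetB N xt yt (fun _ => ⊤) gT) π) ∧
    (∀ (fB fT : Fin (N+1) → WithTop ℤ) (xb xt yb yt : ℤ),
      (∀ j, fB j ≤ fT j) → xb ≤ xt → yb ≤ yt →
      (pathSetB N xb yb fB (fun _ => ⊥)).Nonempty →
      (pathSetB N xt yt fT (fun _ => ⊥)).Nonempty →
      ∃ π, IsMonotoneCoupling N (pathSetB N xb yb fB (fun _ => ⊥))
        (pathSetB N xt yt fT (fun _ => ⊥)) π) :=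
  ⟨fun _ _ _ _ _ _ hg hx hy hb ht => exists_isMonotoneCoupling_pathSetB le_rfl hg hx hy hb ht,
    fun _ _ _ _ _ _ hf hx hy hb ht => exists_isMonotoneCoupling_pathSetB hf le_rfl hx hy hb ht⟩
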